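/- Let R be a noetherian ring which is a finitely generated module over a central subring C, and suppose R is equicodimensional. Then C is equicodimensional, and every maximal ideal of C has height equal to Kdim(R). -/

import Mathlib

/-- A two-sided ideal of a (possibly noncommutative) ring is prime. -/
def IsPrimeTS {R : Type*} [Ring R] (P : TwoSidedIdeal R) : Prop :=
  P ≠ ⊤ ∧ ∀ a b : R, (∀ r : R, a * r * b ∈ P) → a ∈ P ∨ b ∈ P

/-- Height of an element `P` in a poset with respect to a predicate (`prime`):
the supremum of lengths of strictly increasing chains of elements satisfying the
predicate and ending at `P`. -/
noncomputable def primeChainHeight {α : Type*} [Preorder α] (isP : α → Prop) (P : α) : ℕ∞ :=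
  sSup {n : ℕ∞ | ∃ m : ℕ, n = (m : ℕ∞) ∧ ∃ f : Fin (m + 1) → α,
    StrictMono f ∧ (∀ i, isP (f i)) ∧ f (Fin.last m) = P}

/-- Height (codimension) of a two-sided ideal: the supremum of lengths of chains of
prime two-sided ideals descending from it. -/
noncomputable def tsHeight {R : Type*} [Ring R] (P : TwoSidedIdeal R) : ℕ∞ :=
  primeChainHeight IsPrimeTS P

/-- Height of an ideal of a commutative ring. -/
noncomputable def cHeight {C : Type*} [CommRing C] (p : Ideal C) : ℕ∞ :=
  primeChainHeight Ideal.IsPrime p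

/-- Contraction `P ∩ C` of a two-sided ideal of `R` to the central subring `C`
(given via the algebra structure map, whose image is central). -/
def contractTS {C R : Type*} [CommRing C] [Ring R] [Algebra C R]
    (P : TwoSidedIdeal R) : Ideal C :=
  Ideal.comap (algebraMap C R) (TwoSidedIdeal.asIdeal P)

/-- A two-sided ideal is maximal. -/
def IsMaximalTS {R : Type*} [Ring R] (M : TwoSidedIdeal R) : Prop :=
  M ≠ ⊤ ∧ ∀ J : TwoSidedIdeal R, M < J → J = ⊤

/-- Krull dimension of a (possibly noncommutative) ring: the supremum of the
heights of its prime two-sided ideals. -/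
noncomputable def tsKdim (R : Type*) [Ring R] : ℕ∞ :=
  ⨆ P : {P : TwoSidedIdeal R // IsPrimeTS P}, tsHeight P.1

/-- Krull dimension of a commutative ring: the supremum of heights of primes. -/
noncomputable def cKdim (C : Type*) [CommRing C] : ℕ∞ :=
  ⨆ p : {p : Ideal C // p.IsPrime}, cHeight p.1

section Height

variable {α β : Type*} [Preorder α] [Preorder β]

lemma le_primeChainHeight {isP : α → Prop} {P : α} {m : ℕ} (f : Fin (m + 1) → α)
    (hf : StrictMono f) (hP : ∀ i, isP (f i)) (hl : f (Fin.last m) = P) :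
    (m : ℕ∞) ≤ primeChainHeight isP P :=
  le_sSup ⟨m, rfl, f, hf, hP, hl⟩

lemma primeChainHeight_le {isP : α → Prop} {P : α} {c : ℕ∞}
    (h : ∀ m : ℕ, ∀ f : Fin (m + 1) → α, StrictMono f → (∀ i, isP (f i)) →
      f (Fin.last m) = P → (m : ℕ∞) ≤ c) :
    primeChainHeight isP P ≤ c := by
  apply sSup_le
  rintro x ⟨m, rfl, f, h1, h2, h3⟩
  exact h m f h1 h2 h3

end Height

section Basic

variable {R : Type*} [Ring R] {C : Type*} [CommRing C] [Algebra C R]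

lemma mem_contractTS {P : TwoSidedIdeal R} {c : C} :
    c ∈ contractTS (C := C) P ↔ algebraMap C R c ∈ P := Iff.rfl

lemma contractTS_mono : Monotone (contractTS (C := C) (R := R)) := by
  intro P Q h c hc
  exact h hc

lemma contractTS_ne_top {P : TwoSidedIdeal R} (hP : P ≠ ⊤) : contractTS (C := C) P ≠ ⊤ := by
  intro h
  apply hP
  rw [← TwoSidedIdeal.one_mem_iff]
  have h1 : (1 : C) ∈ contractTS (C := C) P := h ▸ trivial
  have h2 := mem_contractTS.mp h1
  rwa [map_one] at h2

lemma contractTS_isPrime {P : TwoSidedIdeal R} (hP : IsPrimeTS P) :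
    (contractTS (C := C) P).IsPrime := by
  constructor
  · exact contractTS_ne_top hP.1
  · intro a b hab
    rw [mem_contractTS, map_mul] at hab
    rcases hP.2 (algebraMap C R a) (algebraMap C R b) (fun r => by
      rw [Algebra.commutes a r, mul_assoc]
      exact P.mul_mem_left _ _ hab) with h | h
    · exact Or.inl h
    · exact Or.inr h

/-- The carrier of a two-sided ideal, as a `C`-submodule of `R`. -/
def tsSubmodule (I : TwoSidedIdeal R) : Submodule C R where
  carrier := I
  add_mem' := I.add_mem
  zero_mem' := I.zero_mem
  smul_mem' := fun c x hx => by
    rw [Algebra.smul_def]; exact I.mul_mem_left _ _ hx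

@[simp] lemma mem_tsSubmodule {I : TwoSidedIdeal R} {x : R} :
    x ∈ tsSubmodule (C := C) I ↔ x ∈ I := Iff.rfl

lemma tsSubmodule_strictMono :
    StrictMono (tsSubmodule (C := C) (R := R)) := by
  intro I J h
  refine lt_of_le_of_ne (fun x hx => h.le hx) (fun heq => h.ne ?_)
  refine TwoSidedIdeal.ext fun x => ?_
  constructor
  · intro hx
    have : x ∈ tsSubmodule (C := C) J := heq ▸ hx
    exact this
  · intro hx
    have : x ∈ tsSubmodule (C := C) I := heq.symm ▸ hx
    exact this

lemma exists_max_mem (C : Type*) [CommRing C] [Algebra C R] [Module.Finite C R]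
    [IsNoetherianRing C] (S : Set (TwoSidedIdeal R)) (hS : S.Nonempty) :
    ∃ M ∈ S, ∀ I ∈ S, ¬ M < I := by
  haveI : IsNoetherian C R := isNoetherian_of_isNoetherianRing_of_finite C R
  have wf : WellFounded ((· > ·) : Submodule C R → Submodule C R → Prop) :=
    (isNoetherian_iff (R := C) (M := R)).mp inferInstance
  have wf2 : WellFounded (fun I J : TwoSidedIdeal R =>
      tsSubmodule (C := C) I > tsSubmodule (C := C) J) := InvImage.wf _ wf
  obtain ⟨M, hM, hmin⟩ := wf2.has_min S hS
  exact ⟨M, hM, fun I hI hlt => hmin I hI (tsSubmodule_strictMono hlt)⟩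

end Basic

section GoingUp

variable {R : Type*} [Ring R] {C : Type*} [CommRing C] [Algebra C R]

lemma mul_mem_smulTop_left {p : Ideal C} {b : R} (r : R)
    (hb : b ∈ (p • (⊤ : Submodule C R) : Submodule C R)) :
    r * b ∈ (p • (⊤ : Submodule C R) : Submodule C R) := by
  refine Submodule.smul_induction_on hb (fun c hc m _ => ?_) (fun x y hx hy => ?_)
  · rw [mul_smul_comm]
    exact Submodule.smul_mem_smul hc trivial
  · rw [mul_add]
    exact Submodule.add_mem _ hx hy

lemma mul_mem_smulTop_right {p : Ideal C} {b : R} (r : R)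
    (hb : b ∈ (p • (⊤ : Submodule C R) : Submodule C R)) :
    b * r ∈ (p • (⊤ : Submodule C R) : Submodule C R) := by
  refine Submodule.smul_induction_on hb (fun c hc m _ => ?_) (fun x y hx hy => ?_)
  · rw [smul_mul_assoc]
    exact Submodule.smul_mem_smul hc trivial
  · rw [add_mul]
    exact Submodule.add_mem _ hx hy

/-- The two-sided ideal `P₀ + pR`. -/
def tsAddSmul (P₀ : TwoSidedIdeal R) (p : Ideal C) : TwoSidedIdeal R :=
  TwoSidedIdeal.mk' (↑(tsSubmodule (C := C) P₀ ⊔ p • (⊤ : Submodule C R)))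
    (Submodule.zero_mem _)
    (fun hx hy => Submodule.add_mem _ hx hy)
    (fun hx => Submodule.neg_mem _ hx)
    (by
      rintro x y hy
      rw [SetLike.mem_coe, Submodule.mem_sup] at hy ⊢
      obtain ⟨a, ha, b, hb, rfl⟩ := hy
      exact ⟨x * a, P₀.mul_mem_left _ _ ha, x * b, mul_mem_smulTop_left x hb, (mul_add x a b).symm⟩)
    (by
      rintro x y hx
      rw [SetLike.mem_coe, Submodule.mem_sup] at hx ⊢
      obtain ⟨a, ha, b, hb, rfl⟩ := hx
      exact ⟨a * y, P₀.mul_mem_right _ _ ha, b * y, mul_mem_smulTop_right y hb, (add_mul a b y).symm⟩)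

lemma mem_tsAddSmul {P₀ : TwoSidedIdeal R} {p : Ideal C} {x : R} :
    x ∈ tsAddSmul P₀ p ↔ x ∈ (tsSubmodule (C := C) P₀ ⊔ p • (⊤ : Submodule C R) : Submodule C R) := by
  rw [tsAddSmul, TwoSidedIdeal.mem_mk']
  rfl

end GoingUp

section Det

variable {R : Type*} [Ring R] {C : Type*} [CommRing C] [Algebra C R]

lemma key_det [Module.Finite C R] {p : Ideal C} (hp : p.IsPrime) (P₀ : TwoSidedIdeal R)
    (hc : contractTS (C := C) P₀ ≤ p) {c : C} (hmem : algebraMap C R c ∈ tsAddSmul P₀ p) :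
    c ∈ p := by
  classical
  set N : Submodule C R := tsSubmodule (C := C) P₀ with hN
  let M := R ⧸ N
  have hMfin : Module.Finite C M := Module.Finite.quotient C N
  -- the scalar multiplication by `c` as an endomorphism of `M`
  set f : Module.End C M := algebraMap C (Module.End C M) c with hf
  have hrange : LinearMap.range f ≤ p • (⊤ : Submodule C M) := by
    rintro y ⟨x, rfl⟩
    obtain ⟨x₀, rfl⟩ := Submodule.Quotient.mk_surjective N x
    have : f (Submodule.Quotient.mk x₀) = Submodule.Quotient.mk (c • x₀) := rfl
    rw [this]
    have hcx : c • x₀ = algebraMap C R c * x₀ := Algebra.smul_def c x₀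
    rw [mem_tsAddSmul, Submodule.mem_sup] at hmem
    obtain ⟨a, ha, b, hb, hab⟩ := hmem
    have : c • x₀ = a * x₀ + b * x₀ := by rw [hcx, ← hab, add_mul]
    rw [this]
    rw [Submodule.Quotient.mk_add]
    have h1 : (Submodule.Quotient.mk (a * x₀) : M) = 0 := by
      rw [Submodule.Quotient.mk_eq_zero]
      exact P₀.mul_mem_right _ _ ha
    rw [h1, zero_add]
    -- b * x₀ ∈ p • ⊤, and mk maps p • ⊤ into p • ⊤
    have hbx : b * x₀ ∈ (p • (⊤ : Submodule C R) : Submodule C R) :=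
      mul_mem_smulTop_right x₀ hb
    refine Submodule.smul_induction_on hbx (fun r hr m _ => ?_) (fun u v hu hv => ?_)
    · rw [Submodule.Quotient.mk_smul]
      exact Submodule.smul_mem_smul hr trivial
    · rw [Submodule.Quotient.mk_add]
      exact Submodule.add_mem _ hu hv
  obtain ⟨q, hmonic, -, hcoeff, heval⟩ :=
    LinearMap.exists_monic_and_coeff_mem_pow_and_aeval_eq_zero_of_range_le_smul C f p hrange
  rw [hf, Polynomial.aeval_algebraMap_apply_eq_algebraMap_eval] at heval
  have heval1 : (Polynomial.eval c q) • (Submodule.Quotient.mk (1 : R) : M) = 0 := by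
    have := congrArg (fun g : Module.End C M => g (Submodule.Quotient.mk (1 : R))) heval
    simpa [Module.algebraMap_end_apply] using this
  have hev : Polynomial.eval c q ∈ p := by
    apply hc
    rw [mem_contractTS]
    have : ((Polynomial.eval c q) • (1 : R)) ∈ N := by
      rwa [← Submodule.Quotient.mk_eq_zero, Submodule.Quotient.mk_smul]
    rwa [Algebra.smul_def, mul_one] at this
  -- conclude c ^ natDegree ∈ p
  set n := q.natDegree with hn
  have hsum : Polynomial.eval c q =
      (∑ i ∈ Finset.range n, q.coeff i * c ^ i) + c ^ n := by
    rw [Polynomial.eval_eq_sum_range (p := q) c, Finset.sum_range_succ,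
      hmonic.coeff_natDegree, one_mul]
  have hterm : (∑ i ∈ Finset.range n, q.coeff i * c ^ i) ∈ p := by
    refine Submodule.sum_mem _ fun i hi => ?_
    rw [Finset.mem_range] at hi
    have : q.coeff i ∈ p := by
      have h2 := hcoeff i
      have : p ^ (n - i) ≤ p := Ideal.pow_le_self (by omega)
      exact this h2
    exact Ideal.mul_mem_right _ _ this
  have hpow : c ^ n ∈ p := by
    have : c ^ n = Polynomial.eval c q - (∑ i ∈ Finset.range n, q.coeff i * c ^ i) := by
      rw [hsum]; ring
    rw [this]
    exact Submodule.sub_mem _ hev hterm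
  exact hp.mem_of_pow_mem n hpow

end Det

section GU

variable {R : Type*} [Ring R] {C : Type*} [CommRing C] [Algebra C R]

/-- The "left-right annihilator" trick ideal: `{w | ∀ r, a * r * w ∈ M}`. -/
def tsU (M : TwoSidedIdeal R) (a : R) : TwoSidedIdeal R :=
  TwoSidedIdeal.mk' {w | ∀ r : R, a * r * w ∈ M}
    (fun r => by simpa using M.zero_mem)
    (fun {x y} hx hy r => by
      have := M.add_mem (hx r) (hy r)
      simpa [mul_add] using this)
    (fun {x} hx r => by
      have := M.neg_mem (hx r)
      simpa [mul_neg] using this)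
    (fun {x y} hy r => by
      have := hy (r * x)
      simpa [mul_assoc] using this)
    (fun {x y} hx r => by
      have := M.mul_mem_right _ y (hx r)
      simpa [mul_assoc] using this)

lemma mem_tsU {M : TwoSidedIdeal R} {a x : R} :
    x ∈ tsU M a ↔ ∀ r : R, a * r * x ∈ M := by
  rw [tsU, TwoSidedIdeal.mem_mk']; rfl

/-- `{z | z * d ∈ M}` for central `d`. -/
def tsV (M : TwoSidedIdeal R) (d : R) (hd : ∀ x : R, d * x = x * d) : TwoSidedIdeal R :=
  TwoSidedIdeal.mk' {z | z * d ∈ M}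
    (by simpa using M.zero_mem)
    (fun {x y} hx hy => by
      have := M.add_mem hx hy
      simpa [add_mul] using this)
    (fun {x} hx => by
      have := M.neg_mem hx
      simpa [neg_mul] using this)
    (fun {x y} hy => by
      have := M.mul_mem_left x _ hy
      simpa [mul_assoc] using this)
    (fun {x y} hx => by
      have : (x * d) * y ∈ M := M.mul_mem_right _ _ hx
      rw [mul_assoc, hd y, ← mul_assoc] at this
      exact this)

lemma mem_tsV {M : TwoSidedIdeal R} {d x : R} {hd} :
    x ∈ tsV M d hd ↔ x * d ∈ M := by
  rw [tsV, TwoSidedIdeal.mem_mk']; rfl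

variable [Module.Finite C R] [IsNoetherianRing C]

lemma going_up (p : Ideal C) (hp : p.IsPrime) (P₀ : TwoSidedIdeal R)
    (hP₀ : contractTS (C := C) P₀ ≤ p) :
    ∃ P : TwoSidedIdeal R, P₀ ≤ P ∧ IsPrimeTS P ∧ contractTS (C := C) P = p := by
  classical
  set K := tsAddSmul P₀ p with hK
  set S : Set (TwoSidedIdeal R) := {I | K ≤ I ∧ contractTS (C := C) I ≤ p} with hS
  have hKS : K ∈ S := by
    refine ⟨le_rfl, fun c hc => ?_⟩
    exact key_det hp P₀ hP₀ (mem_contractTS.mp hc)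
  obtain ⟨M, hMS, hmax⟩ := exists_max_mem C S ⟨K, hKS⟩
  have hKM : K ≤ M := hMS.1
  have hcon : contractTS (C := C) M ≤ p := hMS.2
  have hPM : P₀ ≤ M := by
    intro x hx
    apply hKM
    rw [hK, mem_tsAddSmul]
    exact Submodule.mem_sup_left hx
  have hpM : ∀ c ∈ p, algebraMap C R c ∈ M := by
    intro c hc
    apply hKM
    rw [hK, mem_tsAddSmul]
    apply Submodule.mem_sup_right
    have : algebraMap C R c = c • (1 : R) := by rw [Algebra.smul_def, mul_one]
    rw [this]
    exact Submodule.smul_mem_smul hc trivial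
  have hconM : contractTS (C := C) M = p := le_antisymm hcon (fun c hc => hpM c hc)
  have hMtop : M ≠ ⊤ := by
    intro h
    apply hp.ne_top
    rw [← hconM, h]
    exact (Ideal.eq_top_iff_one _).mpr (mem_contractTS.mpr (TwoSidedIdeal.mem_top R))
  refine ⟨M, hPM, ⟨hMtop, ?_⟩, hconM⟩
  intro a b hab
  by_contra hcon2
  push_neg at hcon2
  obtain ⟨ha, hb⟩ := hcon2
  -- both sup ideals are strictly bigger, hence their contractions are not within p
  have key : ∀ x : R, x ∉ M → ∃ c : C, c ∉ p ∧ algebraMap C R c ∈ M ⊔ TwoSidedIdeal.span {x} := by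
    intro x hx
    have hlt : M < M ⊔ TwoSidedIdeal.span {x} := by
      refine lt_of_le_of_ne le_sup_left (fun h => hx ?_)
      rw [h]
      exact TwoSidedIdeal.mem_sup_right (TwoSidedIdeal.subset_span (by simp))
    have hnotS : M ⊔ TwoSidedIdeal.span {x} ∉ S := fun h => hmax _ h hlt
    rw [hS, Set.mem_setOf_eq] at hnotS
    push_neg at hnotS
    have hKle : K ≤ M ⊔ TwoSidedIdeal.span {x} := le_trans hKM le_sup_left
    obtain ⟨c, hc1, hc2⟩ := Set.not_subset.mp (hnotS hKle)
    exact ⟨c, hc2, mem_contractTS.mp hc1⟩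
  obtain ⟨c, hcp, hcmem⟩ := key a ha
  obtain ⟨d, hdp, hdmem⟩ := key b hb
  -- φ d ∈ tsU M a
  have hdU : algebraMap C R d ∈ tsU M a := by
    have hle : M ⊔ TwoSidedIdeal.span {b} ≤ tsU M a := by
      refine sup_le (fun w hw => mem_tsU.mpr fun r => M.mul_mem_left _ _ hw)
        (fun w hw => ?_)
      exact (TwoSidedIdeal.mem_span_iff.mp hw) (tsU M a) (by
        intro z hz
        simp only [Set.mem_singleton_iff] at hz
        rw [hz]
        exact mem_tsU.mpr hab)
    exact hle hdmem
  -- φ c ∈ tsV M (φ d)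
  have hcV : algebraMap C R c ∈ tsV M (algebraMap C R d) (fun x => (Algebra.commutes d x)) := by
    have hle : M ⊔ TwoSidedIdeal.span {a} ≤ tsV M (algebraMap C R d) (fun x => Algebra.commutes d x) := by
      refine sup_le (fun w hw => mem_tsV.mpr (M.mul_mem_right _ _ hw)) (fun w hw => ?_)
      refine (TwoSidedIdeal.mem_span_iff.mp hw) _ ?_
      intro z hz
      simp only [Set.mem_singleton_iff] at hz
      rw [hz]
      refine mem_tsV.mpr ?_
      have := mem_tsU.mp hdU 1
      rwa [mul_one] at this
    exact hle hcmem
  have : algebraMap C R c * algebraMap C R d ∈ M := mem_tsV.mp hcV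
  rw [← map_mul] at this
  have : c * d ∈ p := hconM ▸ mem_contractTS.mpr this
  rcases hp.mul_mem_iff_mem_or_mem.mp this with h | h
  · exact hcp h
  · exact hdp h

end GU

section MaxTS

variable {R : Type*} [Ring R] {C : Type*} [CommRing C] [Algebra C R]

lemma isMaximalTS_isPrimeTS {M : TwoSidedIdeal R} (hM : IsMaximalTS M) : IsPrimeTS M := by
  refine ⟨hM.1, fun a b hab => ?_⟩
  by_contra hcon
  push_neg at hcon
  obtain ⟨ha, hb⟩ := hcon
  have hlt : M < M ⊔ TwoSidedIdeal.span {b} := by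
    refine lt_of_le_of_ne le_sup_left (fun h => hb ?_)
    rw [h]
    exact TwoSidedIdeal.mem_sup_right (TwoSidedIdeal.subset_span (by simp))
  have htop := hM.2 _ hlt
  have h1 : (1 : R) ∈ M ⊔ TwoSidedIdeal.span {b} := htop ▸ TwoSidedIdeal.mem_top R
  have hle : M ⊔ TwoSidedIdeal.span {b} ≤ tsU M a := by
    refine sup_le (fun w hw => mem_tsU.mpr fun r => M.mul_mem_left _ _ hw) (fun w hw => ?_)
    exact (TwoSidedIdeal.mem_span_iff.mp hw) (tsU M a) (by
      intro z hz
      simp only [Set.mem_singleton_iff] at hz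
      rw [hz]
      exact mem_tsU.mpr hab)
  have := mem_tsU.mp (hle h1) 1
  rw [mul_one, mul_one] at this
  exact ha this

lemma exists_maximalTS_above (C : Type*) [CommRing C] [Algebra C R] [Module.Finite C R]
    [IsNoetherianRing C] (P : TwoSidedIdeal R) (hP : P ≠ ⊤) :
    ∃ M : TwoSidedIdeal R, P ≤ M ∧ IsMaximalTS M := by
  obtain ⟨M, hMS, hmax⟩ := exists_max_mem C {I : TwoSidedIdeal R | P ≤ I ∧ I ≠ ⊤} ⟨P, le_rfl, hP⟩
  refine ⟨M, hMS.1, hMS.2, fun J hJ => ?_⟩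
  by_contra hJtop
  exact hmax J ⟨le_trans hMS.1 hJ.le, hJtop⟩ hJ

end MaxTS

section Chains

variable {R : Type*} [Ring R] {C : Type*} [CommRing C] [Algebra C R]
variable [Module.Finite C R] [IsNoetherianRing C]

lemma contractTS_bot_le (hinj : Function.Injective (algebraMap C R)) (p : Ideal C) :
    contractTS (C := C) (⊥ : TwoSidedIdeal R) ≤ p := by
  intro c hc
  have : algebraMap C R c ∈ (⊥ : TwoSidedIdeal R) := mem_contractTS.mp hc
  rw [TwoSidedIdeal.mem_bot] at this
  have : c = 0 := hinj (by rw [this, map_zero])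
  rw [this]
  exact p.zero_mem

lemma lift_chain (hinj : Function.Injective (algebraMap C R)) :
    ∀ (n : ℕ) (f : Fin (n + 1) → Ideal C), StrictMono f → (∀ i, (f i).IsPrime) →
    ∃ g : Fin (n + 1) → TwoSidedIdeal R, StrictMono g ∧ (∀ i, IsPrimeTS (g i)) ∧
      ∀ i, contractTS (C := C) (g i) = f i := by
  intro n
  induction n with
  | zero =>
    intro f _ hprime
    obtain ⟨P, _, hP, hPc⟩ := going_up (f 0) (hprime 0) ⊥ (contractTS_bot_le hinj _)
    refine ⟨fun _ => P, ?_, fun i => hP, fun i => ?_⟩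
    · intro i j hij
      rw [Fin.lt_def] at hij
      have h1 := i.isLt
      have h2 := j.isLt
      omega
    · have : i = 0 := Fin.ext (by have := i.isLt; omega)
      rw [this, hPc]
  | succ n ih =>
    intro f hf hprime
    obtain ⟨g', hg'mono, hg'prime, hg'c⟩ := ih (f ∘ Fin.castSucc)
      (hf.comp Fin.strictMono_castSucc)
      (fun i => hprime _)
    have hle : contractTS (C := C) (g' (Fin.last n)) ≤ f (Fin.last (n + 1)) := by
      rw [hg'c]
      exact le_of_lt (hf (by simp [Fin.castSucc_lt_last]))
    obtain ⟨P, hP₀, hPprime, hPc⟩ := going_up (f (Fin.last (n + 1)))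
      (hprime _) (g' (Fin.last n)) hle
    refine ⟨Fin.snoc g' P, ?_, ?_, ?_⟩
    · rw [Fin.strictMono_iff_lt_succ]
      intro i
      refine Fin.lastCases ?_ (fun j => ?_) i
      · rw [Fin.snoc_castSucc, Fin.succ_last, Fin.snoc_last]
        refine lt_of_le_of_ne hP₀ (fun h => ?_)
        have : contractTS (C := C) (g' (Fin.last n)) = f (Fin.last (n + 1)) := by
          rw [h, hPc]
        rw [hg'c] at this
        exact absurd this (ne_of_lt (hf (by simp [Fin.castSucc_lt_last])))
      · rw [Fin.snoc_castSucc, Fin.succ_castSucc, Fin.snoc_castSucc]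
        exact hg'mono (by simp [Fin.castSucc_lt_succ])
    · intro i
      refine Fin.lastCases ?_ (fun j => ?_) i
      · rw [Fin.snoc_last]; exact hPprime
      · rw [Fin.snoc_castSucc]; exact hg'prime j
    · intro i
      refine Fin.lastCases ?_ (fun j => ?_) i
      · rw [Fin.snoc_last]; exact hPc
      · rw [Fin.snoc_castSucc]
        rw [hg'c]; rfl

end Chains

section Corner

variable (F : Type*) {A : Type*} [Field F] [Ring A] [Algebra F A]

/-- The subspace `{x | g * x * g = x}` (the Peirce corner of an idempotent). -/
def cornerSub (g : A) : Submodule F A where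
  carrier := {x | g * x * g = x}
  zero_mem' := by simp
  add_mem' := by
    intro x y hx hy
    simp only [Set.mem_setOf_eq] at *
    rw [mul_add, add_mul, hx, hy]
  smul_mem' := by
    intro c x hx
    simp only [Set.mem_setOf_eq] at *
    rw [mul_smul_comm, smul_mul_assoc, hx]

variable {F}

@[simp] lemma mem_cornerSub {g x : A} : x ∈ cornerSub F g ↔ g * x * g = x := Iff.rfl

lemma corner_gx {g x : A} (hg : g * g = g) (hx : x ∈ cornerSub F g) : g * x = x := by
  conv_lhs => rw [← mem_cornerSub.mp hx]
  calc g * (g * x * g) = ((g * g) * x) * g := by simp only [mul_assoc]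
  _ = x := by rw [hg]; exact mem_cornerSub.mp hx

lemma corner_xg {g x : A} (hg : g * g = g) (hx : x ∈ cornerSub F g) : x * g = x := by
  conv_lhs => rw [← mem_cornerSub.mp hx]
  calc (g * x * g) * g = g * x * (g * g) := by simp only [mul_assoc]
  _ = x := by rw [hg]; exact mem_cornerSub.mp hx

theorem corner_one_mem [Module.Finite F A] [Nontrivial A]
    (hprime : ∀ a b : A, (∀ r : A, a * r * b = 0) → a = 0 ∨ b = 0)
    (K : TwoSidedIdeal A) {x₀ : A} (hx₀ : x₀ ∈ K) (hx₀0 : x₀ ≠ 0) : (1 : A) ∈ K := by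
  classical
  have main : ∀ n : ℕ, ∀ g : A, g * g = g → g ≠ 0 →
      Module.finrank F (cornerSub F g) ≤ n → (∃ x ∈ K, g * x * g ≠ 0) → g ∈ K := by
    intro n
    induction n using Nat.strong_induction_on with
    | _ n ih =>
      intro g hg hg0 hrank hKg
      -- the collection of candidate left ideals
      set 𝒮 : Set (Submodule F A) := {V | V ≤ cornerSub F g ⊓ tsSubmodule (C := F) K ∧
        (∀ b : A, ∀ x ∈ V, (g * b * g) * x ∈ V) ∧ V ≠ ⊥} with h𝒮
      have hV₀ : (cornerSub F g ⊓ tsSubmodule (C := F) K) ∈ 𝒮 := by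
        refine ⟨le_rfl, ?_, ?_⟩
        · rintro b x ⟨hx1, hx2⟩
          have hgx : g * x = x := corner_gx hg hx1
          have hxg : x * g = x := corner_xg hg hx1
          constructor
          · have h1 : g * ((g * b * g) * x) = (g * b * g) * x := by
              rw [show g * ((g * b * g) * x) = (g * g) * (b * (g * x)) by
                simp only [mul_assoc], hg]
              simp only [mul_assoc]
            have h2 : ((g * b * g) * x) * g = (g * b * g) * x := by
              simp only [mul_assoc]
              rw [hxg]
            show g * ((g * b * g) * x) * g = (g * b * g) * x
            rw [h1, h2]
          · exact K.mul_mem_left _ _ hx2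
        · obtain ⟨x, hxK, hxg0⟩ := hKg
          rw [Submodule.ne_bot_iff]
          refine ⟨g * x * g, ⟨?_, ?_⟩, hxg0⟩
          · show g * (g * x * g) * g = g * x * g
            calc g * (g * x * g) * g = (g * g) * x * (g * g) := by simp only [mul_assoc]
              _ = g * x * g := by rw [hg]
          · have h := K.mul_mem_left g _ (K.mul_mem_right x g hxK)
            rwa [← mul_assoc] at h
      -- choose L of minimal finrank in 𝒮
      have hne : {k : ℕ | ∃ V ∈ 𝒮, Module.finrank F V = k}.Nonempty := ⟨_, _, hV₀, rfl⟩
      obtain ⟨L, hL𝒮, hLrank⟩ := Nat.sInf_mem hne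
      have hmin : ∀ V ∈ 𝒮, V ≤ L → V = L := by
        intro V hV hle
        refine Submodule.eq_of_le_of_finrank_le hle ?_
        rw [hLrank]
        exact Nat.sInf_le ⟨V, hV, rfl⟩
      obtain ⟨hLle, hLstab, hLbot⟩ := hL𝒮
      have hLc : L ≤ cornerSub F g := le_trans hLle inf_le_left
      have hLK : L ≤ tsSubmodule (C := F) K := le_trans hLle inf_le_right
      obtain ⟨x, hxL, hx0⟩ := Submodule.ne_bot_iff L |>.mp hLbot
      have hxg : x * g = x := corner_xg hg (hLc hxL)
      have hgx : g * x = x := corner_gx hg (hLc hxL)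
      obtain ⟨r, hr⟩ : ∃ r : A, x * r * x ≠ 0 := by
        by_contra h
        push_neg at h
        rcases hprime x x h with h' | h' <;> exact hx0 h'
      set v : A := (g * r * g) * x with hv
      have hvL : v ∈ L := hLstab r x hxL
      have hxv : x * v = x * r * x := by
        calc x * ((g * r * g) * x) = ((x * g) * r) * (g * x) := by simp only [mul_assoc]
          _ = x * r * x := by rw [hxg, hgx]
      have hxv0 : x * v ≠ 0 := by rw [hxv]; exact hr
      have hv0 : v ≠ 0 := by intro h; rw [h, mul_zero] at hxv0; exact hxv0 rfl
      -- right multiplication by v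
      set mulv : A →ₗ[F] A := LinearMap.mulRight F v with hmulv
      have hLv : Submodule.map mulv L = L := by
        apply hmin
        · refine ⟨?_, ?_, ?_⟩
          · rintro _ ⟨y, hyL, rfl⟩
            have hyc := hLc hyL
            have hvc := hLc hvL
            constructor
            · show g * (y * v) * g = y * v
              calc g * (y * v) * g = (g * y) * (v * g) := by simp only [mul_assoc]
                _ = y * v := by rw [corner_gx hg hyc, corner_xg hg hvc]
            · exact K.mul_mem_left _ _ (hLK hvL)
          · intro b y hy
            obtain ⟨z, hzL, rfl⟩ := hy
            exact ⟨(g * b * g) * z, hLstab b z hzL, by simp [hmulv, mul_assoc]⟩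
          · rw [Submodule.ne_bot_iff]
            exact ⟨x * v, ⟨x, hxL, rfl⟩, hxv0⟩
        · rintro _ ⟨y, hyL, rfl⟩
          have hyc := hLc hyL
          have : (mulv) y = (g * y * g) * v := by
            show y * v = (g * y * g) * v
            rw [mem_cornerSub.mp hyc]
          rw [this]
          exact hLstab y v hvL
      obtain ⟨e, heL, hev⟩ : ∃ e ∈ L, e * v = v := by
        have : v ∈ Submodule.map mulv L := hLv.symm ▸ hvL
        obtain ⟨e, heL, he⟩ := this
        exact ⟨e, heL, he⟩
      -- the kernel is trivial
      have hN : L ⊓ LinearMap.ker mulv = ⊥ := by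
        by_contra h
        have hmem : L ⊓ LinearMap.ker mulv ∈ 𝒮 := by
          refine ⟨le_trans inf_le_left hLle, ?_, h⟩
          rintro b y ⟨hy1, hy2⟩
          have hy2' : y * v = 0 := hy2
          refine ⟨hLstab b y hy1, ?_⟩
          show ((g * b * g) * y) * v = 0
          rw [mul_assoc, hy2', mul_zero]
        have := hmin _ hmem inf_le_left
        have hxker : x ∈ L ⊓ LinearMap.ker mulv := this.symm ▸ hxL
        have hxv' : x * v = 0 := hxker.2
        exact hxv0 hxv'
      have he2 : e * e = e := by
        have heeL : e * e ∈ L := by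
          have : e * e = (g * e * g) * e := by rw [mem_cornerSub.mp (hLc heL)]
          rw [this]
          exact hLstab e e heL
        have : e * e - e ∈ L ⊓ LinearMap.ker mulv := by
          refine ⟨Submodule.sub_mem _ heeL heL, ?_⟩
          show (e * e - e) * v = 0
          rw [sub_mul, mul_assoc, hev, hev, sub_self]
        rw [hN, Submodule.mem_bot] at this
        exact sub_eq_zero.mp this
      have he0 : e ≠ 0 := by
        intro h
        rw [h, zero_mul] at hev
        exact hv0 hev.symm
      have heK : e ∈ K := hLK heL
      have hge : g * e = e := corner_gx hg (hLc heL)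
      have heg : e * g = e := corner_xg hg (hLc heL)
      set f : A := g - e with hf
      have hff : f * f = f := by
        rw [hf, sub_mul, mul_sub, mul_sub, hg, hge, heg, he2]
        abel
      have hef : e * f = 0 := by rw [hf, mul_sub, heg, he2, sub_self]
      have hfe : f * e = 0 := by rw [hf, sub_mul, hge, he2, sub_self]
      have hgf : g * f = f := by rw [hf, mul_sub, hg, hge]
      have hfg : f * g = f := by rw [hf, sub_mul, hg, heg]
      by_cases hf0 : f = 0
      · have : g = e := by rw [← sub_eq_zero]; exact hf0
        rw [this]; exact heK
      by_cases hfkf : ∃ k ∈ K, f * k * f ≠ 0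
      · -- recurse into the strictly smaller corner of f
        have hcle : cornerSub F f ≤ cornerSub F g := by
          intro y hy
          rw [mem_cornerSub] at hy ⊢
          conv_lhs => rw [← hy]
          calc g * (f * y * f) * g = (g * f) * y * (f * g) := by simp only [mul_assoc]
            _ = f * y * f := by rw [hgf, hfg]
            _ = y := hy
        have hclt : cornerSub F f < cornerSub F g := by
          refine lt_of_le_of_ne hcle (fun hEq => he0 ?_)
          have heCg : e ∈ cornerSub F g := by
            rw [mem_cornerSub, hge, heg]
          have heCf : e ∈ cornerSub F f := hEq ▸ heCg
          rw [mem_cornerSub] at heCf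
          rw [← heCf, hfe, zero_mul]
        have hrlt : Module.finrank F (cornerSub F f) < n :=
          lt_of_lt_of_le (Submodule.finrank_lt_finrank_of_lt hclt) hrank
        have hfK : f ∈ K := ih _ hrlt f hff hf0 le_rfl hfkf
        have : g = e + f := by rw [hf]; abel
        rw [this]
        exact K.add_mem heK hfK
      · exfalso
        push_neg at hfkf
        by_cases hfk : ∀ k ∈ K, f * k = 0
        · have : ∀ s : A, f * s * x = 0 := by
            intro s
            have : s * x ∈ K := K.mul_mem_left _ _ (hLK hxL)
            rw [mul_assoc]
            exact hfk _ this
          rcases hprime f x this with h | h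
          · exact hf0 h
          · exact hx0 h
        · push_neg at hfk
          obtain ⟨k₀, hk₀K, hk₀0⟩ := hfk
          have hkf : ∀ k ∈ K, k * f = 0 := by
            intro k hk
            have hz : ∀ s : A, (f * k₀) * s * (k * f) = 0 := by
              intro s
              have hmem : k₀ * s * k ∈ K := K.mul_mem_right _ _ (K.mul_mem_right _ _ hk₀K)
              have heq : (f * k₀) * s * (k * f) = f * (k₀ * s * k) * f := by
                simp only [mul_assoc]
              rw [heq]
              exact hfkf _ hmem
            rcases hprime _ _ hz with h | h
            · exact absurd h hk₀0
            · exact h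
          have : ∀ s : A, x * s * f = 0 := by
            intro s
            have : x * s ∈ K := K.mul_mem_right _ _ (hLK hxL)
            exact hkf _ this
          rcases hprime x f this with h | h
          · exact hx0 h
          · exact hf0 h
  exact main (Module.finrank F (cornerSub F 1)) 1 (one_mul 1) one_ne_zero le_rfl
    ⟨x₀, hx₀, by simpa using hx₀0⟩

end Corner

section INC

open scoped TensorProduct

variable {R : Type*} [Ring R] {C : Type*} [CommRing C] [Algebra C R]

set_option maxHeartbeats 2000000 in
set_option synthInstance.maxHeartbeats 200000 in
theorem inc_ts [Module.Finite C R] (P Q : TwoSidedIdeal R) (hP : IsPrimeTS P)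
    (hQ : IsPrimeTS Q) (hlt : P < Q)
    (heq : contractTS (C := C) P = contractTS (C := C) Q) : False := by
  classical
  set p : Ideal C := contractTS (C := C) P with hpdef
  have hpPrime : p.IsPrime := contractTS_isPrime hP
  haveI := hpPrime
  -- quotient ring R/P
  set Rq := P.ringCon.Quotient with hRq
  have hsurj : ∀ x : Rq, ∃ r : R, (r : Rq) = x := fun x => Quot.exists_rep x
  have hzero : ∀ r : R, (r : Rq) = 0 ↔ r ∈ P := by
    intro r
    rw [show (0 : Rq) = ((0 : R) : Rq) from rfl, RingCon.eq, TwoSidedIdeal.rel_iff]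
    simp
  haveI : Nontrivial Rq := by
    refine ⟨1, 0, fun h => hP.1 ?_⟩
    rw [← TwoSidedIdeal.one_mem_iff]
    rw [show (1 : Rq) = ((1 : R) : Rq) from rfl] at h
    exact (hzero 1).mp h
  -- R/P is a prime ring
  have hRqprime : ∀ a b : Rq, (∀ r : Rq, a * r * b = 0) → a = 0 ∨ b = 0 := by
    intro a b h
    obtain ⟨x, rfl⟩ := hsurj a
    obtain ⟨y, rfl⟩ := hsurj b
    rcases hP.2 x y (fun r => by
      have := h (r : Rq)
      rw [show ((x : Rq) * r * y) = ((x * r * y : R) : Rq) from rfl] at this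
      exact (hzero _).mp this) with h' | h'
    · exact Or.inl ((hzero x).mpr h')
    · exact Or.inr ((hzero y).mpr h')
  -- the base ring C/p
  set Cq := C ⧸ p with hCq
  have hmksurj : ∀ c : Cq, ∃ c₀ : C, Ideal.Quotient.mk p c₀ = c := Ideal.Quotient.mk_surjective
  -- the algebra map Cq →+* Rq
  set φ0 : C →+* Rq := (RingCon.mk' P.ringCon).comp (algebraMap C R) with hφ0
  have hφ0app : ∀ c : C, φ0 c = ((algebraMap C R c : R) : Rq) := fun _ => rfl
  have hφ0ker : ∀ c ∈ p, φ0 c = 0 := by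
    intro c hc
    rw [hφ0app, hzero]
    exact mem_contractTS.mp hc
  set φq : Cq →+* Rq := Ideal.Quotient.lift p φ0 hφ0ker with hφq
  have hφqmk : ∀ c : C, φq (Ideal.Quotient.mk p c) = ((algebraMap C R c : R) : Rq) := by
    intro c
    rw [hφq, Ideal.Quotient.lift_mk, hφ0app]
  have hcentral : ∀ (c : Cq) (x : Rq), φq c * x = x * φq c := by
    intro c x
    obtain ⟨c₀, rfl⟩ := hmksurj c
    obtain ⟨x₀, rfl⟩ := hsurj x
    rw [hφqmk]
    rw [show ((algebraMap C R c₀ : R) : Rq) * (x₀ : Rq) = ((algebraMap C R c₀ * x₀ : R) : Rq)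
      from rfl]
    rw [show (x₀ : Rq) * ((algebraMap C R c₀ : R) : Rq) = ((x₀ * algebraMap C R c₀ : R) : Rq)
      from rfl]
    rw [Algebra.commutes]
  letI algCqRq : Algebra Cq Rq := φq.toAlgebra' hcentral
  have halg : (algebraMap Cq Rq) = φq := rfl
  have hsmulq : ∀ (c : Cq) (x : Rq), c • x = φq c * x := fun c x => rfl
  -- finiteness of Rq over Cq
  obtain ⟨s, hs⟩ := Module.Finite.fg_top (R := C) (M := R)
  have hcast : ∀ (c : C) (y : R), ((c • y : R) : Rq) = (Ideal.Quotient.mk p c) • (y : Rq) := by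
    intro c y
    rw [Algebra.smul_def, hsmulq, hφqmk]
    rfl
  haveI hRqfin : Module.Finite Cq Rq := by
    refine ⟨⟨s.image (fun r : R => (r : Rq)), ?_⟩⟩
    rw [eq_top_iff]
    rintro x -
    obtain ⟨x₀, rfl⟩ := hsurj x
    have hx₀ : x₀ ∈ Submodule.span C (s : Set R) := by rw [hs]; trivial
    refine Submodule.span_induction ?_ ?_ ?_ ?_ hx₀
    · intro z hz
      exact Submodule.subset_span (by simp [Finset.mem_image]; exact ⟨z, hz, rfl⟩)
    · exact Submodule.zero_mem _
    · intro u v _ _ hu hv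
      rw [show ((u + v : R) : Rq) = (u : Rq) + (v : Rq) from rfl]
      exact Submodule.add_mem _ hu hv
    · intro c y _ hy
      rw [hcast]
      exact Submodule.smul_mem _ _ hy
  -- torsion-freeness
  have htors : ∀ (c : Cq) (x : Rq), c • x = 0 → c = 0 ∨ x = 0 := by
    intro c x h
    obtain ⟨c₀, rfl⟩ := hmksurj c
    obtain ⟨x₀, rfl⟩ := hsurj x
    rw [hsmulq, hφqmk] at h
    rw [show ((algebraMap C R c₀ : R) : Rq) * (x₀ : Rq) = ((algebraMap C R c₀ * x₀ : R) : Rq)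
      from rfl, hzero] at h
    by_cases hc : algebraMap C R c₀ ∈ P
    · left
      rw [Ideal.Quotient.eq_zero_iff_mem]
      exact mem_contractTS.mpr hc
    · right
      rcases hP.2 (algebraMap C R c₀) x₀ (fun r => by
        rw [Algebra.commutes c₀ r, mul_assoc]
        exact P.mul_mem_left _ _ h) with h' | h'
      · exact absurd h' hc
      · exact (hzero x₀).mpr h'
  -- Cq is a domain; fraction field
  haveI : IsDomain Cq := Ideal.Quotient.isDomain p
  set F := FractionRing Cq with hF
  set A := F ⊗[Cq] Rq with hA
  -- injectivity of x ↦ 1 ⊗ x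
  have hι : ∀ x : Rq, (1 : F) ⊗ₜ[Cq] x = 0 → x = 0 := by
    intro x hx
    by_contra hx0
    haveI hflat : Module.Flat Cq F := IsLocalization.flat F (nonZeroDivisors Cq)
    set ψ : Cq →ₗ[Cq] Rq := LinearMap.toSpanSingleton Cq Rq x with hψ
    have hψinj : Function.Injective ψ := by
      intro c c' h
      have : (c - c') • x = 0 := by
        rw [sub_smul]
        rw [hψ] at h
        simp only [LinearMap.toSpanSingleton_apply] at h
        rw [h, sub_self]
      rcases htors _ _ this with h' | h'
      · exact sub_eq_zero.mp h'
      · exact absurd h' hx0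
    have hinj2 := Module.Flat.lTensor_preserves_injective_linearMap (M := F) ψ hψinj
    have : LinearMap.lTensor F ψ ((1 : F) ⊗ₜ[Cq] (1 : Cq)) = 0 := by
      rw [LinearMap.lTensor_tmul]
      have : ψ 1 = x := by rw [hψ]; simp
      rw [this, hx]
    have h10 : (1 : F) ⊗ₜ[Cq] (1 : Cq) = 0 := by
      apply hinj2
      rw [this, map_zero]
    have h10' : (1 : F) ⊗ₜ[Cq] (1 : Cq) = (0 : F) ⊗ₜ[Cq] (1 : Cq) :=
      h10.trans (TensorProduct.zero_tmul F (1 : Cq)).symm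
    have h11 := congrArg (TensorProduct.rid Cq F) h10'
    rw [TensorProduct.rid_tmul, TensorProduct.rid_tmul, one_smul, one_smul] at h11
    exact one_ne_zero h11
  haveI : Nontrivial A := by
    refine ⟨1, 0, fun h => ?_⟩
    rw [Algebra.TensorProduct.one_def] at h
    exact one_ne_zero (hι 1 h)
  -- clearing denominators
  have hdenom : ∀ a : A, ∃ (d : nonZeroDivisors Cq) (x : Rq), (d : Cq) • a = (1 : F) ⊗ₜ[Cq] x := by
    intro a
    induction a using TensorProduct.induction_on with
    | zero => exact ⟨1, 0, by simp⟩
    | tmul f y =>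
      obtain ⟨⟨c, d⟩, hcd⟩ := IsLocalization.surj (nonZeroDivisors Cq) f
      refine ⟨d, c • y, ?_⟩
      rw [TensorProduct.smul_tmul']
      have hd : (d : Cq) • f = algebraMap Cq F c := by
        rw [Algebra.smul_def, mul_comm]
        exact hcd
      rw [hd, Algebra.algebraMap_eq_smul_one, TensorProduct.smul_tmul]
    | add u w hu hw =>
      obtain ⟨d1, x1, h1⟩ := hu
      obtain ⟨d2, x2, h2⟩ := hw
      refine ⟨d1 * d2, (d2 : Cq) • x1 + (d1 : Cq) • x2, ?_⟩
      rw [smul_add]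
      have e1 : ((d1 * d2 : nonZeroDivisors Cq) : Cq) • u = (d2 : Cq) • ((d1 : Cq) • u) := by
        rw [Submonoid.coe_mul, mul_comm, mul_smul]
      have e2 : ((d1 * d2 : nonZeroDivisors Cq) : Cq) • w = (d1 : Cq) • ((d2 : Cq) • w) := by
        rw [Submonoid.coe_mul, mul_smul]
      rw [e1, e2, h1, h2, ← TensorProduct.tmul_smul, ← TensorProduct.tmul_smul,
        ← TensorProduct.tmul_add]
  -- killing a Cq-scalar
  have hsmulA : ∀ (d : nonZeroDivisors Cq) (a : A), (d : Cq) • a = 0 → a = 0 := by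
    intro d a h
    have h2 : (algebraMap Cq F (d : Cq)) • a = 0 := by
      rw [algebraMap_smul]
      exact h
    have hd0 : algebraMap Cq F (d : Cq) ≠ 0 := by
      rw [Ne, IsFractionRing.to_map_eq_zero_iff]
      exact nonZeroDivisors.coe_ne_zero d
    rcases smul_eq_zero.mp h2 with h' | h'
    · exact absurd h' hd0
    · exact h'
  -- A is a prime ring
  have hAprime : ∀ a b : A, (∀ z : A, a * z * b = 0) → a = 0 ∨ b = 0 := by
    intro a b h
    by_contra hc
    push_neg at hc
    obtain ⟨ha0, hb0⟩ := hc
    obtain ⟨d, x, hx⟩ := hdenom a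
    obtain ⟨e, y, hy⟩ := hdenom b
    have hx0 : x ≠ 0 := by
      intro h0
      rw [h0, TensorProduct.tmul_zero] at hx
      exact ha0 (hsmulA d a hx)
    have hy0 : y ≠ 0 := by
      intro h0
      rw [h0, TensorProduct.tmul_zero] at hy
      exact hb0 (hsmulA e b hy)
    have hz : ∀ r : Rq, x * r * y = 0 := by
      intro r
      apply hι
      have step : ((1 : F) ⊗ₜ[Cq] x) * ((1 : F) ⊗ₜ[Cq] r) * ((1 : F) ⊗ₜ[Cq] y)
          = (1 : F) ⊗ₜ[Cq] (x * r * y) := by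
        rw [Algebra.TensorProduct.tmul_mul_tmul, Algebra.TensorProduct.tmul_mul_tmul,
          one_mul, one_mul]
      rw [← step, ← hx, ← hy]
      have e1 : ((d : Cq) • a) * ((1 : F) ⊗ₜ[Cq] r) * ((e : Cq) • b)
          = (d : Cq) • ((e : Cq) • (a * ((1 : F) ⊗ₜ[Cq] r) * b)) := by
        rw [smul_mul_assoc, smul_mul_assoc, mul_smul_comm]
      rw [e1, h, smul_zero, smul_zero]
    rcases hRqprime x y hz with h' | h'
    · exact hx0 h'
    · exact hy0 h'
  -- the pushed-forward ideal of Q, with denominators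
  set K : TwoSidedIdeal A := TwoSidedIdeal.mk'
    {z : A | ∃ d : nonZeroDivisors Cq, ∃ q : R, q ∈ Q ∧ (d : Cq) • z = (1 : F) ⊗ₜ[Cq] (q : Rq)}
    ⟨1, 0, Q.zero_mem, by simp⟩
    (by
      rintro z w ⟨d1, q1, hq1, h1⟩ ⟨d2, q2, hq2, h2⟩
      obtain ⟨c1, hc1⟩ := hmksurj (d1 : Cq)
      obtain ⟨c2, hc2⟩ := hmksurj (d2 : Cq)
      refine ⟨d1 * d2, algebraMap C R c2 * q1 + algebraMap C R c1 * q2,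
        Q.add_mem (Q.mul_mem_left _ _ hq1) (Q.mul_mem_left _ _ hq2), ?_⟩
      rw [smul_add]
      have e1 : ((d1 * d2 : nonZeroDivisors Cq) : Cq) • z = (d2 : Cq) • ((d1 : Cq) • z) := by
        rw [Submonoid.coe_mul, mul_comm, mul_smul]
      have e2 : ((d1 * d2 : nonZeroDivisors Cq) : Cq) • w = (d1 : Cq) • ((d2 : Cq) • w) := by
        rw [Submonoid.coe_mul, mul_smul]
      rw [e1, e2, h1, h2, ← TensorProduct.tmul_smul, ← TensorProduct.tmul_smul, ←
        TensorProduct.tmul_add]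
      congr 1
      rw [← hc1, ← hc2, hsmulq, hsmulq, hφqmk, hφqmk]
      rw [show ((algebraMap C R c2 : R) : Rq) * (q1 : Rq) = ((algebraMap C R c2 * q1 : R) : Rq)
        from rfl]
      rw [show ((algebraMap C R c1 : R) : Rq) * (q2 : Rq) = ((algebraMap C R c1 * q2 : R) : Rq)
        from rfl]
      rfl)
    (by
      rintro z ⟨d, q, hq, h⟩
      refine ⟨d, -q, Q.neg_mem hq, ?_⟩
      rw [smul_neg, h]
      rw [show ((-q : R) : Rq) = -(q : Rq) from rfl, TensorProduct.tmul_neg])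
    (by
      rintro x z ⟨d, q, hq, h⟩
      obtain ⟨dx, xr, hxr⟩ := hdenom x
      obtain ⟨x₀, hx₀⟩ := hsurj xr
      refine ⟨dx * d, x₀ * q, Q.mul_mem_left _ _ hq, ?_⟩
      have e1 : ((dx * d : nonZeroDivisors Cq) : Cq) • (x * z)
          = ((dx : Cq) • x) * ((d : Cq) • z) := by
        rw [Submonoid.coe_mul, mul_smul, smul_mul_assoc, mul_smul_comm]
      rw [e1, hxr, h, Algebra.TensorProduct.tmul_mul_tmul, one_mul, ← hx₀]
      rfl)
    (by
      rintro z x ⟨d, q, hq, h⟩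
      obtain ⟨dx, xr, hxr⟩ := hdenom x
      obtain ⟨x₀, hx₀⟩ := hsurj xr
      refine ⟨d * dx, q * x₀, Q.mul_mem_right _ _ hq, ?_⟩
      have e1 : ((d * dx : nonZeroDivisors Cq) : Cq) • (z * x)
          = ((d : Cq) • z) * ((dx : Cq) • x) := by
        rw [Submonoid.coe_mul, mul_comm ((d : Cq)) ((dx : Cq)), mul_smul, mul_smul_comm,
          smul_mul_assoc]
      rw [e1, hxr, h, Algebra.TensorProduct.tmul_mul_tmul, one_mul, ← hx₀]
      rfl)
    with hK
  have hKiff : ∀ z : A, z ∈ K ↔ ∃ d : nonZeroDivisors Cq, ∃ q : R, q ∈ Q ∧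
      (d : Cq) • z = (1 : F) ⊗ₜ[Cq] ((q : R) : Rq) := by
    intro z
    rw [hK, TwoSidedIdeal.mem_mk']
    rfl
  obtain ⟨a₀, ha₀Q, ha₀P⟩ : ∃ a₀ : R, a₀ ∈ Q ∧ a₀ ∉ P := by
    rw [TwoSidedIdeal.lt_iff] at hlt
    obtain ⟨x, hxQ, hxP⟩ := Set.exists_of_ssubset hlt
    exact ⟨x, hxQ, hxP⟩
  have hne : ((a₀ : R) : Rq) ≠ 0 := fun h => ha₀P ((hzero a₀).mp h)
  have hK0 : (1 : F) ⊗ₜ[Cq] ((a₀ : R) : Rq) ≠ 0 := fun h => hne (hι _ h)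
  have hmemK : (1 : F) ⊗ₜ[Cq] ((a₀ : R) : Rq) ∈ K := by
    refine (hKiff _).mpr ⟨1, a₀, ha₀Q, ?_⟩
    rw [OneMemClass.coe_one, one_smul]
  haveI : Module.Finite F A := inferInstance
  have h1K : (1 : A) ∈ K := corner_one_mem (F := F) hAprime K hmemK hK0
  obtain ⟨d, q, hqQ, hd⟩ := (hKiff 1).mp h1K
  obtain ⟨c, hc⟩ := hmksurj (d : Cq)
  have hdl : (d : Cq) • (1 : A) = (1 : F) ⊗ₜ[Cq] (((algebraMap C R c : R)) : Rq) := by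
    rw [Algebra.TensorProduct.one_def, ← TensorProduct.tmul_smul]
    congr 1
    rw [hsmulq, mul_one, ← hc, hφqmk]
  have heq2 : (1 : F) ⊗ₜ[Cq] ((algebraMap C R c : R) : Rq)
      = (1 : F) ⊗ₜ[Cq] ((q : R) : Rq) := by rw [← hdl, hd]
  have hdiff : (1 : F) ⊗ₜ[Cq] ((algebraMap C R c - q : R) : Rq) = 0 := by
    rw [show ((algebraMap C R c - q : R) : Rq) = ((algebraMap C R c : R) : Rq) - ((q : R) : Rq)
      from rfl, TensorProduct.tmul_sub, heq2, sub_self]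
  have hPm : algebraMap C R c - q ∈ P := (hzero _).mp (hι _ hdiff)
  have hφcQ : algebraMap C R c ∈ Q := by
    have := Q.add_mem (hlt.le hPm) hqQ
    rwa [sub_add_cancel] at this
  have hcp : c ∈ p := by rw [heq]; exact mem_contractTS.mpr hφcQ
  have hd0 : (d : Cq) = 0 := by rw [← hc, Ideal.Quotient.eq_zero_iff_mem]; exact hcp
  exact nonZeroDivisors.coe_ne_zero d hd0

end INC

/-- Let `R` be a noetherian ring which is a finitely generated module over a central
subring `C`, and suppose `R` is equicodimensional.  Then `C` is equicodimensional,
and every maximal ideal of `C` has height equal to `Kdim R`. -/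
theorem center_equicodimensional_of_equicodimensional {C R : Type*} [CommRing C]
    [IsNoetherianRing C] [Ring R] [Algebra C R]
    (hinj : Function.Injective (algebraMap C R)) [Module.Finite C R]
    (hequi : ∀ M : TwoSidedIdeal R, IsMaximalTS M → tsHeight M = tsKdim R) :
    ∀ m : Ideal C, m.IsMaximal → cHeight m = tsKdim R := by
  intro m hm
  obtain ⟨P, _, hPprime, hPc⟩ := going_up m hm.isPrime ⊥ (contractTS_bot_le hinj m)
  obtain ⟨M, hPM, hMmax⟩ := exists_maximalTS_above C P hPprime.1
  have hconM : contractTS (C := C) M = m := by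
    have h1 : m ≤ contractTS (C := C) M := hPc ▸ contractTS_mono hPM
    have h2 : contractTS (C := C) M ≠ ⊤ := contractTS_ne_top hMmax.1
    exact (hm.eq_of_le h2 h1).symm
  have hup : cHeight m ≤ tsKdim R := by
    unfold cHeight
    apply primeChainHeight_le
    intro n f hmono hprimes hlast
    obtain ⟨g, hgmono, hgprime, hgc⟩ := lift_chain hinj n f hmono hprimes
    have hle1 : (n : ℕ∞) ≤ tsHeight (g (Fin.last n)) :=
      le_primeChainHeight g hgmono hgprime rfl
    refine le_trans hle1 ?_
    exact le_iSup (fun P : {P : TwoSidedIdeal R // IsPrimeTS P} => tsHeight P.1)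
      ⟨g (Fin.last n), hgprime _⟩
  have hdown : tsHeight M ≤ cHeight m := by
    unfold tsHeight cHeight
    apply primeChainHeight_le
    intro n f hmono hprimes hlast
    refine le_primeChainHeight (fun i => contractTS (C := C) (f i)) ?_ ?_ ?_
    · intro i j hij
      have hle := contractTS_mono (C := C) (R := R) (le_of_lt (hmono hij))
      refine lt_of_le_of_ne hle (fun heqc => ?_)
      exact inc_ts (f i) (f j) (hprimes i) (hprimes j) (hmono hij) heqc
    · intro i; exact contractTS_isPrime (hprimes i)
    · show contractTS (C := C) (f (Fin.last n)) = m
      rw [hlast, hconM]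
  have hM := hequi M hMmax
  exact le_antisymm hup (hM ▸ hdown)
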